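/- Let X ⊆ ℝⁿ be nonempty, c ∈ ℝⁿ, and suppose ω ↦ Q(x,ξ(ω)) is integrable for all x ∈ X. Let 𝒫⁰ := {Ξ} and for k ≥ 1 let 𝒫^k be a finite measurable partition of Ξ that ℙ-refines 𝒫^{k−1}. For each k ≥ 1 let x_k ∈ X satisfy cᵀx_k + V_{𝒫^{k−1}}(x_k) ≤ cᵀx + V_{𝒫^{k−1}}(x) for all x ∈ X, and suppose V_{𝒫^k}(x_k) = V(x_k). Define z^L_k := cᵀx_k + V_{𝒫^{k−1}}(x_k) and z^U_k := min_{1 ≤ i ≤ k} (cᵀx_i + V_{𝒫^i}(x_i)). Then for every k ≥ 2: z^L_{k−1} ≤ z^L_k ≤ inf_{x ∈ X}(cᵀx + V(x)) ≤ z^U_k ≤ z^U_{k−1}. -/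

import Mathlib

open MeasureTheory
open scoped BigOperators Classical

noncomputable section

/-- The space of alea `Ξ = ℝ^{l×n} × ℝ^l`: pairs `ξ = (T, h)`. -/
abbrev Xi (l n : ℕ) := (Fin l → Fin n → ℝ) × (Fin l → ℝ)

/-- The dual admissible polyhedron `D = {λ : Wᵀλ ≤ q}`. -/
def polyD {l m : ℕ} (W : Fin l → Fin m → ℝ) (q : Fin m → ℝ) : Set (Fin l → ℝ) :=
  {lam | ∀ j, (∑ i, W i j * lam i) ≤ q j}

/-- Recourse cost `Q(x, ξ) = sup_{λ ∈ D} ⟨h - Tx, λ⟩ ∈ ℝ ∪ {+∞}` (as an `EReal`). -/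
def Qfun {l n m : ℕ} (W : Fin l → Fin m → ℝ) (q : Fin m → ℝ)
    (x : Fin n → ℝ) (ξ : Xi l n) : EReal :=
  ⨆ lam ∈ polyD W q, ((∑ i, (ξ.2 i - ∑ j, ξ.1 i j * x j) * lam i : ℝ) : EReal)

/-- A finite measurable partition of `α`, given as a `Finset` of sets. -/
def IsFinPartition {α : Type*} [MeasurableSpace α] (Ps : Finset (Set α)) : Prop :=
  (∀ P ∈ Ps, MeasurableSet P) ∧ ((Ps : Set (Set α)).PairwiseDisjoint id) ∧
    ⋃₀ (Ps : Set (Set α)) = Set.univ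

/-- Conditional expectation `E[ξ | ξ ∈ P] = E[ξ 1_{ξ ∈ P}] / ℙ[ξ ∈ P]`. -/
def condMean {Ω : Type*} [MeasurableSpace Ω] {l n : ℕ} (ℙ : Measure Ω)
    (ξ : Ω → Xi l n) (P : Set (Xi l n)) : Xi l n :=
  (ℙ (ξ ⁻¹' P)).toReal⁻¹ • ∫ ω in ξ ⁻¹' P, ξ ω ∂ℙ

/-- Expected cost-to-go of a partition: `V_Ps(x) = Σ_{P ∈ Ps, ℙ[ξ∈P] > 0} ℙ[ξ∈P] Q(x, E[ξ|P])`. -/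
def Vpart {Ω : Type*} [MeasurableSpace Ω] {l n m : ℕ} (W : Fin l → Fin m → ℝ)
    (q : Fin m → ℝ) (ℙ : Measure Ω) (ξ : Ω → Xi l n) (Ps : Finset (Set (Xi l n)))
    (x : Fin n → ℝ) : EReal :=
  ∑ P ∈ Ps, if 0 < ℙ (ξ ⁻¹' P) then
    ((ℙ (ξ ⁻¹' P)).toReal : EReal) * Qfun W q x (condMean ℙ ξ P) else 0

/-- True expected cost-to-go `V(x) = E[Q(x, ξ)] ∈ ℝ ∪ {+∞}`: the real integral when
`Q(x, ξ)` is integrable (a.e. finite with integrable real part), `+∞` otherwise. -/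
def Vtrue {Ω : Type*} [MeasurableSpace Ω] {l n m : ℕ} (W : Fin l → Fin m → ℝ)
    (q : Fin m → ℝ) (ℙ : Measure Ω) (ξ : Ω → Xi l n) (x : Fin n → ℝ) : EReal :=
  if (∀ᵐ ω ∂ℙ, Qfun W q x (ξ ω) ≠ ⊤) ∧
      Integrable (fun ω => (Qfun W q x (ξ ω)).toReal) ℙ then
    (((∫ ω, (Qfun W q x (ξ ω)).toReal ∂ℙ) : ℝ) : EReal)
  else ⊤

/-- `Ps` ℙ-refines `ℛ`: every `P ∈ Ps` is ℙ-essentially contained in some `R ∈ ℛ`. -/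
def PRefines {Ω : Type*} [MeasurableSpace Ω] {l n : ℕ} (ℙ : Measure Ω) (ξ : Ω → Xi l n)
    (Ps ℛ : Finset (Set (Xi l n))) : Prop :=
  ∀ P ∈ Ps, ∃ R ∈ ℛ, ℙ (ξ ⁻¹' (P ∩ R)) = ℙ (ξ ⁻¹' P)

/-- Conditional expectation `E[Q(x,ξ) | ξ ∈ P] ∈ ℝ ∪ {+∞}`: equal to
`E[Q(x,ξ) 1_{ξ∈P}] / ℙ[ξ∈P]` when `Q(x,ξ) 1_{ξ∈P}` is integrable, `+∞` otherwise. -/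
def condQ {Ω : Type*} [MeasurableSpace Ω] {l n m : ℕ} (W : Fin l → Fin m → ℝ)
    (q : Fin m → ℝ) (ℙ : Measure Ω) (ξ : Ω → Xi l n) (x : Fin n → ℝ)
    (P : Set (Xi l n)) : EReal :=
  if (∀ᵐ ω ∂ℙ, ξ ω ∈ P → Qfun W q x (ξ ω) ≠ ⊤) ∧
      IntegrableOn (fun ω => (Qfun W q x (ξ ω)).toReal) (ξ ⁻¹' P) ℙ then
    (((ℙ (ξ ⁻¹' P)).toReal⁻¹ * ∫ ω in ξ ⁻¹' P, (Qfun W q x (ξ ω)).toReal ∂ℙ : ℝ) : EReal)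
  else ⊤

/-- Subdifferential of an `EReal`-valued function at `x`. -/
def SubDiff {n : ℕ} (f : (Fin n → ℝ) → EReal) (x : Fin n → ℝ) : Set (Fin n → ℝ) :=
  {g | ∀ y, f x + ((∑ i, g i * (y i - x i) : ℝ) : EReal) ≤ f y}

/-!
The recourse cost `Q(x, ·)` is the supremum of the linear functionals `ζ ↦ ⟨h - Tx, λ⟩`, `λ ∈ D`.
Hence it is positively homogeneous, subadditive and satisfies Jensen's inequality
`Q(x, ∫_S ξ) ≤ ∫_S Q(x, ξ)`. By homogeneity the contribution `ℙ[ξ ∈ P] Q(x, E[ξ|P])` of a cell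
is `Q(x, ∫_{ξ ∈ P} ξ)`, so Jensen gives `V_𝒫 ≤ V`; and if `𝒫` refines `ℛ`, splitting the integral
over each cell of `ℛ` along `𝒫` and using subadditivity gives `V_ℛ ≤ V_𝒫`. The four inequalities
then follow from the optimality of the `x_k` and from `V_{𝒫^k}(x_k) = V(x_k)`.
-/

open Set

lemma EReal.coe_finsetSum {ι : Type*} (s : Finset ι) (f : ι → ℝ) :
    ((∑ i ∈ s, f i : ℝ) : EReal) = ∑ i ∈ s, (f i : EReal) :=
  map_sum (⟨⟨((↑) : ℝ → EReal), EReal.coe_zero⟩, EReal.coe_add⟩ : ℝ →+ EReal) f s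

section LinearSup

variable {ι E : Type*} [NormedAddCommGroup E] [NormedSpace ℝ E]

def linearSup (L : ι → E →L[ℝ] ℝ) (s : Set ι) (ζ : E) : EReal :=
  ⨆ i ∈ s, (L i ζ : EReal)

variable {L : ι → E →L[ℝ] ℝ} {s : Set ι}

lemma coe_le_linearSup {i : ι} (hi : i ∈ s) (ζ : E) : (L i ζ : EReal) ≤ linearSup L s ζ :=
  le_iSup₂ (f := fun i (_ : i ∈ s) => (L i ζ : EReal)) i hi

lemma linearSup_ne_bot (hs : s.Nonempty) (ζ : E) : linearSup L s ζ ≠ ⊥ :=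
  ne_bot_of_le_ne_bot (EReal.coe_ne_bot _) (coe_le_linearSup hs.some_mem ζ)

lemma linearSup_zero (hs : s.Nonempty) : linearSup L s 0 = 0 := by
  simp only [linearSup, map_zero, EReal.coe_zero, biSup_const hs]

lemma linearSup_add_le (a b : E) :
    linearSup L s (a + b) ≤ linearSup L s a + linearSup L s b :=
  iSup₂_le fun i hi => by
    rw [map_add, EReal.coe_add]
    exact add_le_add (coe_le_linearSup hi a) (coe_le_linearSup hi b)

lemma linearSup_sum_le {κ : Type*} (t : Finset κ) (f : κ → E) :
    linearSup L s (∑ j ∈ t, f j) ≤ ∑ j ∈ t, linearSup L s (f j) :=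
  Finset.le_sum_of_subadditive _ (iSup₂_le fun i _ => by simp) linearSup_add_le t f

lemma linearSup_smul_le {t : ℝ} (ht : 0 ≤ t) (ζ : E) :
    linearSup L s (t • ζ) ≤ t * linearSup L s ζ :=
  iSup₂_le fun i hi => by
    rw [map_smul, smul_eq_mul, EReal.coe_mul]
    exact mul_le_mul_of_nonneg_left (coe_le_linearSup hi ζ) (EReal.coe_nonneg.2 ht)

lemma linearSup_smul {t : ℝ} (ht : 0 < t) (ζ : E) :
    linearSup L s (t • ζ) = t * linearSup L s ζ := by
  refine (linearSup_smul_le ht.le ζ).antisymm ?_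
  calc (t : EReal) * linearSup L s ζ
      = t * linearSup L s (t⁻¹ • t • ζ) := by rw [inv_smul_smul₀ ht.ne']
    _ ≤ t * ((t⁻¹ : ℝ) * linearSup L s (t • ζ)) :=
        mul_le_mul_of_nonneg_left (linearSup_smul_le (inv_nonneg.2 ht.le) _)
          (EReal.coe_nonneg.2 ht.le)
    _ = linearSup L s (t • ζ) := by
        rw [← mul_assoc, ← EReal.coe_mul, mul_inv_cancel₀ ht.ne', EReal.coe_one, one_mul]

lemma linearSup_integral_le [CompleteSpace E] {Ω : Type*} [MeasurableSpace Ω] {μ : Measure Ω}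
    (hs : s.Nonempty) {f : Ω → E} (hf : Integrable f μ)
    (hfin : ∀ᵐ ω ∂μ, linearSup L s (f ω) ≠ ⊤)
    (hint : Integrable (fun ω => (linearSup L s (f ω)).toReal) μ) :
    linearSup L s (∫ ω, f ω ∂μ) ≤ ((∫ ω, (linearSup L s (f ω)).toReal ∂μ : ℝ) : EReal) :=
  iSup₂_le fun i hi => by
    rw [← (L i).integral_comp_comm hf, EReal.coe_le_coe_iff]
    refine integral_mono_ae ((L i).integrable_comp hf) hint ?_
    filter_upwards [hfin] with ω hω
    rw [← EReal.coe_le_coe_iff, EReal.coe_toReal hω (linearSup_ne_bot hs _)]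
    exact coe_le_linearSup hi _

end LinearSup

section Partition

variable {Ω α F : Type*} [MeasurableSpace Ω] [MeasurableSpace α]
  [NormedAddCommGroup F] [NormedSpace ℝ F] {μ : Measure Ω} {ξ : Ω → α} {Ps : Finset (Set α)}

lemma isFinPartition_singleton_univ : IsFinPartition ({univ} : Finset (Set α)) :=
  ⟨by simp, by simp, by simp⟩

lemma measure_inter_eq_zero_of_inter_ae_eq {S A B : Set Ω} (hae : (S ∩ A : Set Ω) =ᵐ[μ] S)
    (hAB : Disjoint A B) : μ (S ∩ B) = 0 := by
  have h : (S ∩ B : Set Ω) =ᵐ[μ] (S ∩ A ∩ B : Set Ω) := hae.symm.inter (ae_eq_refl B)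
  rw [measure_congr h, inter_assoc, hAB.inter_eq, inter_empty, measure_empty]

lemma integral_eq_sum_setIntegral_preimage (hP : IsFinPartition Ps) (hξ : Measurable ξ)
    {f : Ω → F} (hf : Integrable f μ) :
    ∫ ω, f ω ∂μ = ∑ P ∈ Ps, ∫ ω in ξ ⁻¹' P, f ω ∂μ := by
  have hcover : ⋃ P ∈ Ps, ξ ⁻¹' P = univ := by
    rw [← preimage_iUnion₂, ← Finset.set_biUnion_coe, ← sUnion_eq_biUnion, hP.2.2, preimage_univ]
  rw [← integral_biUnion_finset Ps (fun P hP' => hξ (hP.1 P hP'))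
    (fun P hP' Q hQ hne => (hP.2.1 hP' hQ hne).preimage ξ) (fun P _ => hf.integrableOn),
    hcover, setIntegral_univ]

lemma setIntegral_eq_sum_setIntegral_preimage_inter (hP : IsFinPartition Ps)
    (hξ : Measurable ξ) {f : Ω → F} (hf : Integrable f μ) (S : Set Ω) :
    ∫ ω in S, f ω ∂μ = ∑ P ∈ Ps, ∫ ω in ξ ⁻¹' P ∩ S, f ω ∂μ := by
  rw [integral_eq_sum_setIntegral_preimage hP hξ hf.restrict]
  exact Finset.sum_congr rfl fun P hP' => by rw [Measure.restrict_restrict (hξ (hP.1 P hP'))]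

end Partition

def dualObjective {l n : ℕ} (x : Fin n → ℝ) (lam : Fin l → ℝ) : Xi l n →L[ℝ] ℝ :=
  LinearMap.toContinuousLinearMap
    { toFun := fun ζ => ∑ i, (ζ.2 i - ∑ j, ζ.1 i j * x j) * lam i
      map_add' := fun a b => by
        simp only [Prod.fst_add, Prod.snd_add, Pi.add_apply, add_mul, Finset.sum_add_distrib]
        rw [← Finset.sum_add_distrib]
        exact Finset.sum_congr rfl fun i _ => by ring
      map_smul' := fun t a => by
        simp only [Prod.smul_fst, Prod.smul_snd, Pi.smul_apply, smul_eq_mul, RingHom.id_apply,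
          mul_assoc, ← Finset.mul_sum]
        rw [Finset.mul_sum]
        exact Finset.sum_congr rfl fun i _ => by ring }

lemma Qfun_eq_linearSup {l n m : ℕ} (W : Fin l → Fin m → ℝ) (q : Fin m → ℝ) (x : Fin n → ℝ) :
    Qfun W q x = linearSup (dualObjective x) (polyD W q) :=
  rfl

section Vpart

variable {Ω : Type*} [MeasurableSpace Ω] {l n m : ℕ} {W : Fin l → Fin m → ℝ} {q : Fin m → ℝ}
  {ℙ : Measure Ω} [IsFiniteMeasure ℙ] {ξ : Ω → Xi l n} {Ps Rs : Finset (Set (Xi l n))}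
  {x : Fin n → ℝ}

lemma Vpart_eq_sum_Qfun_setIntegral (hD : (polyD W q).Nonempty) :
    Vpart W q ℙ ξ Ps x = ∑ P ∈ Ps, Qfun W q x (∫ ω in ξ ⁻¹' P, ξ ω ∂ℙ) := by
  refine Finset.sum_congr rfl fun P _ => ?_
  split_ifs with hpos
  · have ht : 0 < (ℙ (ξ ⁻¹' P)).toReal := ENNReal.toReal_pos hpos.ne' (measure_ne_top _ _)
    rw [condMean, Qfun_eq_linearSup, ← linearSup_smul ht, smul_inv_smul₀ ht.ne']
  · rw [setIntegral_measure_zero _ (nonpos_iff_eq_zero.1 (not_lt.1 hpos)), Qfun_eq_linearSup,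
      linearSup_zero hD]

lemma Vpart_le_Vtrue (hD : (polyD W q).Nonempty) (hξ : Measurable ξ) (hξint : Integrable ξ ℙ)
    (hfin : ∀ᵐ ω ∂ℙ, Qfun W q x (ξ ω) ≠ ⊤)
    (hint : Integrable (fun ω => (Qfun W q x (ξ ω)).toReal) ℙ) (hP : IsFinPartition Ps) :
    Vpart W q ℙ ξ Ps x ≤ Vtrue W q ℙ ξ x := by
  rw [Vtrue, if_pos ⟨hfin, hint⟩, Vpart_eq_sum_Qfun_setIntegral hD,
    integral_eq_sum_setIntegral_preimage hP hξ hint, EReal.coe_finsetSum, Qfun_eq_linearSup]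
  rw [Qfun_eq_linearSup] at hfin hint
  exact Finset.sum_le_sum fun P _ =>
    linearSup_integral_le hD hξint.restrict (ae_restrict_of_ae hfin) hint.restrict

/-- A cell `P` lying `ℙ`-essentially in `R₀ ∈ Rs` meets every other cell of `Rs` in a null set. -/
lemma sum_Qfun_setIntegral_inter_eq (hD : (polyD W q).Nonempty) (hξ : Measurable ξ)
    (hR : IsFinPartition Rs) {P : Set (Xi l n)} (hPm : MeasurableSet P)
    (hPR : ∃ R ∈ Rs, ℙ (ξ ⁻¹' (P ∩ R)) = ℙ (ξ ⁻¹' P)) :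
    ∑ R ∈ Rs, Qfun W q x (∫ ω in ξ ⁻¹' P ∩ ξ ⁻¹' R, ξ ω ∂ℙ) =
      Qfun W q x (∫ ω in ξ ⁻¹' P, ξ ω ∂ℙ) := by
  obtain ⟨R₀, hR₀, hmass⟩ := hPR
  have hae : (ξ ⁻¹' P ∩ ξ ⁻¹' R₀ : Set Ω) =ᵐ[ℙ] ξ ⁻¹' P :=
    ae_eq_of_subset_of_measure_ge inter_subset_left hmass.ge
      (hξ (hPm.inter (hR.1 R₀ hR₀))).nullMeasurableSet (measure_ne_top _ _)
  rw [Finset.sum_eq_single_of_mem R₀ hR₀, setIntegral_congr_set hae]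
  intro R hR' hne
  rw [setIntegral_measure_zero _
      (measure_inter_eq_zero_of_inter_ae_eq (B := ξ ⁻¹' R) hae
        ((hR.2.1 hR₀ hR' hne.symm).preimage ξ)),
    Qfun_eq_linearSup, linearSup_zero hD]

lemma Vpart_le_Vpart_of_pRefines (hD : (polyD W q).Nonempty) (hξ : Measurable ξ)
    (hξint : Integrable ξ ℙ) (hP : IsFinPartition Ps) (hR : IsFinPartition Rs)
    (href : PRefines ℙ ξ Ps Rs) :
    Vpart W q ℙ ξ Rs x ≤ Vpart W q ℙ ξ Ps x := by
  rw [Vpart_eq_sum_Qfun_setIntegral hD, Vpart_eq_sum_Qfun_setIntegral hD]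
  calc ∑ R ∈ Rs, Qfun W q x (∫ ω in ξ ⁻¹' R, ξ ω ∂ℙ)
      = ∑ R ∈ Rs, Qfun W q x (∑ P ∈ Ps, ∫ ω in ξ ⁻¹' P ∩ ξ ⁻¹' R, ξ ω ∂ℙ) := by
        simp only [← setIntegral_eq_sum_setIntegral_preimage_inter hP hξ hξint]
    _ ≤ ∑ R ∈ Rs, ∑ P ∈ Ps, Qfun W q x (∫ ω in ξ ⁻¹' P ∩ ξ ⁻¹' R, ξ ω ∂ℙ) :=
        Finset.sum_le_sum fun R _ => by rw [Qfun_eq_linearSup]; exact linearSup_sum_le _ _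
    _ = ∑ P ∈ Ps, ∑ R ∈ Rs, Qfun W q x (∫ ω in ξ ⁻¹' P ∩ ξ ⁻¹' R, ξ ω ∂ℙ) := Finset.sum_comm
    _ = ∑ P ∈ Ps, Qfun W q x (∫ ω in ξ ⁻¹' P, ξ ω ∂ℙ) :=
        Finset.sum_congr rfl fun P hP' =>
          sum_Qfun_setIntegral_inter_eq hD hξ hR (hP.1 P hP') (href P hP')

end Vpart

theorem apm_bounds_monotone_general
    {Ω : Type*} [MeasurableSpace Ω] {l n m : ℕ}
    (W : Fin l → Fin m → ℝ) (q : Fin m → ℝ) (hD : (polyD W q).Nonempty)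
    (ℙ : Measure Ω) [IsProbabilityMeasure ℙ]
    (ξ : Ω → Xi l n) (hξmeas : Measurable ξ) (hξint : Integrable ξ ℙ)
    (X : Set (Fin n → ℝ)) (c : Fin n → ℝ)
    (hQint : ∀ x ∈ X, (∀ᵐ ω ∂ℙ, Qfun W q x (ξ ω) ≠ ⊤) ∧
      Integrable (fun ω => (Qfun W q x (ξ ω)).toReal) ℙ)
    (Ps : ℕ → Finset (Set (Xi l n)))
    (hPs0 : Ps 0 = {Set.univ})
    (hPart : ∀ k, 1 ≤ k → IsFinPartition (Ps k))
    (hRef : ∀ k, 1 ≤ k → PRefines ℙ ξ (Ps k) (Ps (k - 1)))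
    (x : ℕ → Fin n → ℝ) (hxX : ∀ k, 1 ≤ k → x k ∈ X)
    (hopt : ∀ k, 1 ≤ k → ∀ y ∈ X,
      ((∑ i, c i * x k i : ℝ) : EReal) + Vpart W q ℙ ξ (Ps (k - 1)) (x k) ≤
        ((∑ i, c i * y i : ℝ) : EReal) + Vpart W q ℙ ξ (Ps (k - 1)) y)
    (hadapt : ∀ k, 1 ≤ k → Vpart W q ℙ ξ (Ps k) (x k) = Vtrue W q ℙ ξ (x k)) :
    let zL : ℕ → EReal := fun k =>
      ((∑ i, c i * x k i : ℝ) : EReal) + Vpart W q ℙ ξ (Ps (k - 1)) (x k)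
    let zU : ℕ → EReal := fun k =>
      ⨅ i ∈ Finset.Icc 1 k, (((∑ i', c i' * x i i' : ℝ) : EReal) + Vpart W q ℙ ξ (Ps i) (x i))
    let valP : EReal := ⨅ y ∈ X, (((∑ i, c i * y i : ℝ) : EReal) + Vtrue W q ℙ ξ y)
    ∀ k, 2 ≤ k → zL (k - 1) ≤ zL k ∧ zL k ≤ valP ∧ valP ≤ zU k ∧ zU k ≤ zU (k - 1) := by
  intro zL zU valP k hk
  have hPart' : ∀ j, IsFinPartition (Ps j) := fun j => by
    rcases Nat.eq_zero_or_pos j with rfl | hj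
    · exact hPs0 ▸ isFinPartition_singleton_univ
    · exact hPart j hj
  have hmono : ∀ j, 1 ≤ j → ∀ y, Vpart W q ℙ ξ (Ps (j - 1)) y ≤ Vpart W q ℙ ξ (Ps j) y :=
    fun j hj _ => Vpart_le_Vpart_of_pRefines hD hξmeas hξint (hPart' j) (hPart' _) (hRef j hj)
  refine ⟨?_, le_iInf₂ fun y hy => ?_, le_iInf₂ fun i hi => ?_, biInf_mono fun i hi => ?_⟩
  · calc zL (k - 1) ≤ _ := hopt (k - 1) (by omega) (x k) (hxX k (by omega))
      _ ≤ zL k := add_le_add_right (hmono (k - 1) (by omega) (x k)) _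
  · calc zL k ≤ _ := hopt k (by omega) y hy
      _ ≤ _ := add_le_add_right
        (Vpart_le_Vtrue hD hξmeas hξint (hQint y hy).1 (hQint y hy).2 (hPart' _)) _
  · obtain ⟨hi1, -⟩ := Finset.mem_Icc.1 hi
    rw [hadapt i hi1]
    exact iInf₂_le (x i) (hxX i hi1)
  · simp only [Finset.mem_Icc] at hi ⊢
    omega

/-- Lemma 10: monotonicity of the bounds produced by the generic
adaptive partition-based method: `z^L_{k-1} ≤ z^L_k ≤ val(2SLP) ≤ z^U_k ≤ z^U_{k-1}`. -/
theorem apm_bounds_monotone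
    {Ω : Type*} [MeasurableSpace Ω] {l n m : ℕ}
    (hl : 0 < l) (hn : 0 < n) (hm : 0 < m)
    (W : Fin l → Fin m → ℝ) (q : Fin m → ℝ) (hD : (polyD W q).Nonempty)
    (ℙ : Measure Ω) [IsProbabilityMeasure ℙ]
    (ξ : Ω → Xi l n) (hξmeas : Measurable ξ) (hξint : Integrable ξ ℙ)
    (X : Set (Fin n → ℝ)) (hX : X.Nonempty) (c : Fin n → ℝ)
    (hQint : ∀ x ∈ X, (∀ᵐ ω ∂ℙ, Qfun W q x (ξ ω) ≠ ⊤) ∧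
      Integrable (fun ω => (Qfun W q x (ξ ω)).toReal) ℙ)
    (Ps : ℕ → Finset (Set (Xi l n)))
    (hPs0 : Ps 0 = {Set.univ})
    (hPart : ∀ k, 1 ≤ k → IsFinPartition (Ps k))
    (hRef : ∀ k, 1 ≤ k → PRefines ℙ ξ (Ps k) (Ps (k - 1)))
    (x : ℕ → Fin n → ℝ) (hxX : ∀ k, 1 ≤ k → x k ∈ X)
    (hopt : ∀ k, 1 ≤ k → ∀ y ∈ X,
      ((∑ i, c i * x k i : ℝ) : EReal) + Vpart W q ℙ ξ (Ps (k - 1)) (x k) ≤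
        ((∑ i, c i * y i : ℝ) : EReal) + Vpart W q ℙ ξ (Ps (k - 1)) y)
    (hadapt : ∀ k, 1 ≤ k → Vpart W q ℙ ξ (Ps k) (x k) = Vtrue W q ℙ ξ (x k)) :
    let zL : ℕ → EReal := fun k =>
      ((∑ i, c i * x k i : ℝ) : EReal) + Vpart W q ℙ ξ (Ps (k - 1)) (x k)
    let zU : ℕ → EReal := fun k =>
      ⨅ i ∈ Finset.Icc 1 k, (((∑ i', c i' * x i i' : ℝ) : EReal) + Vpart W q ℙ ξ (Ps i) (x i))
    let valP : EReal := ⨅ y ∈ X, (((∑ i, c i * y i : ℝ) : EReal) + Vtrue W q ℙ ξ y)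
    ∀ k, 2 ≤ k → zL (k - 1) ≤ zL k ∧ zL k ≤ valP ∧ valP ≤ zU k ∧ zU k ≤ zU (k - 1) :=
  apm_bounds_monotone_general W q hD ℙ ξ hξmeas hξint X c hQint Ps hPs0 hPart hRef x hxX hopt hadapt

end
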